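/- Let A ∈ M_2(F[t]) be skew-hermitian with det(A) ≠ 0 and gcd(A) = 1. Then A is congruent to a matrix both of whose diagonal entries are zero. -/

import Mathlib

open Polynomial

noncomputable def pstar {F : Type*} [Field F] (p : F[X]) : F[X] := p.comp (-X)

noncomputable def mstar {F : Type*} [Field F] {n : ℕ}
    (A : Matrix (Fin n) (Fin n) F[X]) : Matrix (Fin n) (Fin n) F[X] :=
  Matrix.of fun i j => pstar (A j i)

def MatCongruent {F : Type*} [Field F] {n : ℕ}
    (A B : Matrix (Fin n) (Fin n) F[X]) : Prop :=
  ∃ S : Matrix (Fin n) (Fin n) F[X], IsUnit S.det ∧ B = mstar S * A * S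

/-!
Write `A = [[a, b], [-b*, d]]` with `a* = -a`, `d* = -d`. The determinant `ad + bb*` is fixed
by `*`, so over an algebraically closed field it is a norm `z z*`; the vector `(z - b, a)`, divided
by its gcd, is then a primitive isotropic vector, and `A` becomes congruent to
`[[0, c], [-c*, d']]`. If `c` and `c*` are coprime, the odd polynomial `d'` has the form
`c* s - s* c` and the shear `[[1, s], [0, 1]]` removes it. In general, sorting the roots `±δ`
shared by `c` and `c*` gives `c = w e` with `w* ∣ e` and `e` coprime to `e*`; solving
`e* x - e x* = d'` yields an isotropic vector `(x, w*)`, primitive because the entries of `A`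
generate `F[t]`, which replaces `c` by `w e*`, and `w e*` is coprime to its conjugate.
-/

section

variable {F : Type*} [Field F]

section Involution

@[simp] lemma pstar_add (p q : F[X]) : pstar (p + q) = pstar p + pstar q := add_comp

@[simp] lemma pstar_sub (p q : F[X]) : pstar (p - q) = pstar p - pstar q := sub_comp

@[simp] lemma pstar_neg (p : F[X]) : pstar (-p) = -pstar p := neg_comp

@[simp] lemma pstar_mul (p q : F[X]) : pstar (p * q) = pstar p * pstar q := mul_comp_neg_X p q

@[simp] lemma pstar_pow (p : F[X]) (k : ℕ) : pstar (p ^ k) = pstar p ^ k := pow_comp p (-X) k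

@[simp] lemma pstar_one : pstar (1 : F[X]) = 1 := one_comp

@[simp] lemma pstar_zero : pstar (0 : F[X]) = 0 := zero_comp

@[simp] lemma pstar_C (a : F) : pstar (C a) = C a := C_comp

@[simp] lemma pstar_X : pstar (X : F[X]) = -X := X_comp

@[simp] lemma pstar_pstar (p : F[X]) : pstar (pstar p) = p := comp_neg_X_comp_neg_X p

@[simp] lemma eval_pstar (p : F[X]) (a : F) : (pstar p).eval a = p.eval (-a) := by
  simp [pstar, eval_comp]

@[simp] lemma pstar_eq_zero {p : F[X]} : pstar p = 0 ↔ p = 0 :=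
  ⟨fun h => by simpa using congrArg pstar h, fun h => by rw [h, pstar_zero]⟩

lemma pstar_dvd_pstar {p q : F[X]} (h : p ∣ q) : pstar p ∣ pstar q :=
  map_dvd (compRingHom (-X)) h

lemma IsCoprime.pstar {p q : F[X]} (h : IsCoprime p q) : IsCoprime (pstar p) (pstar q) :=
  h.map (compRingHom (-X))

lemma eval_zero_eq_zero_of_pstar_eq_neg (h2 : (2 : F) ≠ 0) {p : F[X]} (hp : pstar p = -p) :
    p.eval 0 = 0 := by
  have h := congrArg (eval 0) hp
  rw [eval_pstar, neg_zero, eval_neg] at h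
  exact (mul_eq_zero.1 (by linear_combination h : (2 : F) * p.eval 0 = 0)).resolve_left h2

lemma exists_pstar_mul_sub_mul_pstar_eq (h2 : (2 : F) ≠ 0) {e d : F[X]}
    (he : IsCoprime e (pstar e)) (hd : pstar d = -d) :
    ∃ x, pstar e * x - e * pstar x = d := by
  obtain ⟨u, v, huv⟩ := he
  have huv' : pstar u * pstar e + pstar v * e = 1 := by simpa using congrArg pstar huv
  have hhalf : C (2⁻¹ : F) * 2 = 1 := by
    rw [← map_ofNat C 2, ← C_mul, inv_mul_cancel₀ h2, C_1]
  -- `f = e* (v + u*) / 2` satisfies `f + f* = 1`, so `x = f d / e*` works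
  refine ⟨C (2⁻¹ : F) * (v + pstar u) * d, ?_⟩
  simp only [pstar_mul, pstar_add, pstar_C, pstar_pstar, hd]
  linear_combination (C (2⁻¹ : F) * d) * (huv + huv') + d * hhalf

lemma isCoprime_mul_pstar {w e : F[X]} (hwe : pstar w ∣ e) (he : IsCoprime e (pstar e)) :
    IsCoprime (w * pstar e) (pstar (w * pstar e)) := by
  have hw : w ∣ pstar e := by simpa using pstar_dvd_pstar hwe
  have h : IsCoprime (pstar e) (pstar w * e) :=
    (he.symm.of_isCoprime_of_dvd_right hwe).mul_right he.symm
  rw [pstar_mul, pstar_pstar]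
  exact (h.of_isCoprime_of_dvd_left hw).mul_left h

end Involution

section Congruence

variable {n : ℕ}

lemma mstar_eq_transpose_map (M : Matrix (Fin n) (Fin n) F[X]) :
    mstar M = (M.map (compRingHom (-X))).transpose := rfl

lemma mstar_mul (M N : Matrix (Fin n) (Fin n) F[X]) : mstar (M * N) = mstar N * mstar M := by
  simp only [mstar_eq_transpose_map, Matrix.map_mul, Matrix.transpose_mul]

@[simp] lemma mstar_mstar (M : Matrix (Fin n) (Fin n) F[X]) : mstar (mstar M) = M :=
  Matrix.ext fun i j => pstar_pstar (M i j)

@[simp] lemma mstar_one : mstar (1 : Matrix (Fin n) (Fin n) F[X]) = 1 := by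
  rw [mstar_eq_transpose_map, Matrix.map_one _ (map_zero _) (map_one _), Matrix.transpose_one]

lemma det_mstar (M : Matrix (Fin n) (Fin n) F[X]) : (mstar M).det = pstar M.det := by
  rw [mstar_eq_transpose_map, Matrix.det_transpose]
  exact ((compRingHom (-X)).map_det M).symm

lemma pstar_apply_of_mstar_eq_neg {M : Matrix (Fin n) (Fin n) F[X]} (hM : mstar M = -M)
    (i j : Fin n) : pstar (M j i) = -M i j :=
  congrFun (congrFun hM i) j

variable {A B C : Matrix (Fin n) (Fin n) F[X]}

lemma MatCongruent.trans (hAB : MatCongruent A B) (hBC : MatCongruent B C) :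
    MatCongruent A C := by
  obtain ⟨S, hS, rfl⟩ := hAB
  obtain ⟨T, hT, rfl⟩ := hBC
  refine ⟨S * T, by rw [Matrix.det_mul]; exact hS.mul hT, ?_⟩
  simp only [mstar_mul, Matrix.mul_assoc]

lemma MatCongruent.symm (h : MatCongruent A B) : MatCongruent B A := by
  obtain ⟨S, hS, rfl⟩ := h
  have hinv : S * S⁻¹ = 1 := Matrix.mul_nonsing_inv S hS
  refine ⟨S⁻¹, by rw [Matrix.det_nonsing_inv]; exact hS.ringInverse, ?_⟩
  calc A = mstar (S * S⁻¹) * A * (S * S⁻¹) := by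
        rw [hinv, mstar_one, Matrix.one_mul, Matrix.mul_one]
    _ = mstar S⁻¹ * (mstar S * A * S) * S⁻¹ := by simp only [mstar_mul, Matrix.mul_assoc]

lemma MatCongruent.mstar_eq_neg (h : MatCongruent A B) (hA : mstar A = -A) : mstar B = -B := by
  obtain ⟨S, -, rfl⟩ := h
  rw [mstar_mul, mstar_mul, mstar_mstar, hA, Matrix.mul_assoc, Matrix.neg_mul, Matrix.mul_neg]

end Congruence

section EntryIdeal

variable {R : Type*} [CommRing R] {m n : Type*}

def entryIdeal (A : Matrix m n R) : Ideal R :=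
  Ideal.span (Set.range fun p : m × n => A p.1 p.2)

lemma entryIdeal_le_iff {A : Matrix m n R} {I : Ideal R} :
    entryIdeal A ≤ I ↔ ∀ i j, A i j ∈ I := by
  simp [entryIdeal, Ideal.span_le, Set.range_subset_iff]

lemma entryIdeal_mul_mul_le [Fintype m] [Fintype n] {l o : Type*} (M : Matrix l m R)
    (A : Matrix m n R) (N : Matrix n o R) : entryIdeal (M * A * N) ≤ entryIdeal A := by
  refine entryIdeal_le_iff.2 fun i j => ?_
  simp only [Matrix.mul_apply]
  refine Ideal.sum_mem _ fun l _ => Ideal.mul_mem_right _ _ (Ideal.sum_mem _ fun k _ => ?_)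
  exact Ideal.mul_mem_left _ _ (entryIdeal_le_iff.1 le_rfl k l)

end EntryIdeal

lemma MatCongruent.entryIdeal_eq {n : ℕ} {A B : Matrix (Fin n) (Fin n) F[X]}
    (h : MatCongruent A B) : entryIdeal B = entryIdeal A := by
  apply le_antisymm
  · obtain ⟨S, -, rfl⟩ := h
    exact entryIdeal_mul_mul_le _ _ _
  · obtain ⟨S, -, rfl⟩ := h.symm
    exact entryIdeal_mul_mul_le _ _ _

section Factorization

lemma X_sq_sub_C_dvd_of_isRoot (h2 : (2 : F) ≠ 0) {p : F[X]} {δ : F} (hδ : δ ≠ 0)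
    (hp : p.IsRoot δ) (hp' : p.IsRoot (-δ)) : X ^ 2 - C δ ^ 2 ∣ p := by
  have hcop : IsCoprime (X - C δ) (X - C (-δ)) :=
    isCoprime_X_sub_C_of_isUnit_sub (by simpa [← two_mul] using mul_ne_zero h2 hδ)
  have h := hcop.mul_dvd (dvd_iff_isRoot.2 hp) (dvd_iff_isRoot.2 hp')
  rwa [map_neg, sub_neg_eq_add, show (X - C δ) * (X + C δ) = X ^ 2 - C δ ^ 2 by ring] at h

lemma X_sq_sub_C_dvd_of_pstar_eq (h2 : (2 : F) ≠ 0) {p : F[X]} (hp : pstar p = p) {δ : F}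
    (hδ : p.IsRoot δ) : X ^ 2 - C δ ^ 2 ∣ p := by
  rcases eq_or_ne δ 0 with rfl | hδ0
  · obtain ⟨q, rfl⟩ := X_dvd_iff.2 (by rwa [coeff_zero_eq_eval_zero] : p.coeff 0 = 0)
    have hq : pstar q = -q := by
      refine mul_left_cancel₀ (X_ne_zero (R := F)) ?_
      linear_combination (-1 : F[X]) * (by simpa using hp : -X * pstar q = X * q)
    have hq0 : q.coeff 0 = 0 := by
      rw [coeff_zero_eq_eval_zero]; exact eval_zero_eq_zero_of_pstar_eq_neg h2 hq
    obtain ⟨r, rfl⟩ := X_dvd_iff.2 hq0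
    exact ⟨r, by rw [C_0]; ring⟩
  · exact X_sq_sub_C_dvd_of_isRoot h2 hδ0 hδ (by rw [IsRoot, ← eval_pstar, hp]; exact hδ)

lemma natDegree_lt_of_eq_X_sq_sub_C_mul {p q : F[X]} {a : F} (hp : p ≠ 0)
    (h : p = (X ^ 2 - C a) * q) : q.natDegree < p.natDegree := by
  have hq : q ≠ 0 := by rintro rfl; simp [h] at hp
  rw [h, natDegree_mul (X_pow_sub_C_ne_zero two_pos a) hq, natDegree_X_pow_sub_C]
  omega

lemma isCoprime_X_add_C_mul_pstar (h2 : (2 : F) ≠ 0) {e : F[X]} (he : IsCoprime e (pstar e))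
    {β : F} (hβ : β ≠ 0) (hβe : ¬ e.IsRoot β) :
    IsCoprime ((X + C β) * e) (pstar ((X + C β) * e)) := by
  have hXe : IsCoprime (X - C β) e :=
    (prime_X_sub_C β).coprime_iff_not_dvd.2 (mt dvd_iff_isRoot.1 hβe)
  have hXe' : IsCoprime (X + C β) (pstar e) := by
    have := hXe.pstar
    rwa [pstar_sub, pstar_X, pstar_C, neg_sub_left, IsCoprime.neg_left_iff, add_comm] at this
  have hXX : IsCoprime (X + C β) (X - C β) := by
    rw [← sub_neg_eq_add, ← C_neg]
    refine isCoprime_X_sub_C_of_isUnit_sub (isUnit_iff_ne_zero.2 ?_)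
    rw [neg_sub_left, neg_ne_zero, ← two_mul]
    exact mul_ne_zero h2 hβ
  rw [show pstar ((X + C β) * e) = -((X - C β) * pstar e) by
    simp only [pstar_mul, pstar_add, pstar_X, pstar_C]; ring]
  exact ((hXX.mul_right hXe').mul_left (hXe.symm.mul_right he)).neg_right

variable [IsAlgClosed F]

lemma exists_mul_pstar_eq (h2 : (2 : F) ≠ 0) {p : F[X]} (hp : pstar p = p) :
    ∃ z, z * pstar z = p := by
  induction hn : p.natDegree using Nat.strong_induction_on generalizing p with
  | _ n ih =>
  by_cases hdeg : p.degree ≤ 0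
  · obtain ⟨s, hs⟩ := IsAlgClosed.exists_eq_mul_self (p.coeff 0)
    exact ⟨C s, by rw [eq_C_of_degree_le_zero hdeg, hs, pstar_C, C_mul]⟩
  obtain ⟨δ, hδ⟩ := IsAlgClosed.exists_root p (by contrapose! hdeg; exact hdeg.le)
  obtain ⟨q, hpq⟩ := X_sq_sub_C_dvd_of_pstar_eq h2 hp hδ
  have hp0 : p ≠ 0 := by rintro rfl; simp at hdeg
  have hq : pstar q = q := by
    refine mul_left_cancel₀ (X_pow_sub_C_ne_zero two_pos (δ ^ 2)) ?_
    have := congrArg pstar hpq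
    simp only [hp, pstar_mul, pstar_sub, pstar_pow, pstar_X, pstar_C] at this
    rw [C_pow]
    linear_combination hpq - this
  have hlt := natDegree_lt_of_eq_X_sq_sub_C_mul hp0 (by rw [hpq, C_pow])
  obtain ⟨y, hy⟩ := ih _ (hn ▸ hlt) hq rfl
  obtain ⟨i, hi⟩ := IsAlgClosed.exists_eq_mul_self (-1 : F)
  have hCi : C i * C i = -1 := by rw [← C_mul, ← hi, C_neg, C_1]
  -- `i (X - δ)` has norm `X ^ 2 - δ ^ 2`
  refine ⟨C i * (X - C δ) * y, ?_⟩
  simp only [pstar_mul, pstar_C, pstar_sub, pstar_X]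
  rw [hpq]
  linear_combination ((X - C δ) * (-X - C δ) * y * pstar y) * hCi + (X ^ 2 - C δ ^ 2) * hy

lemma exists_eq_mul_pstar_dvd_isCoprime (h2 : (2 : F) ≠ 0) {c : F[X]} (hc : c.eval 0 ≠ 0) :
    ∃ w e, c = w * e ∧ pstar w ∣ e ∧ IsCoprime e (pstar e) := by
  induction hn : c.natDegree using Nat.strong_induction_on generalizing c with
  | _ n ih =>
  by_cases hcop : IsCoprime c (pstar c)
  · exact ⟨1, c, (one_mul c).symm, by simp, hcop⟩
  obtain ⟨δ, hδ, hδ'⟩ : ∃ δ, c.IsRoot δ ∧ c.IsRoot (-δ) := by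
    rw [isCoprime_iff_aeval_ne_zero_of_isAlgClosed F F] at hcop
    push Not at hcop
    simpa [IsRoot] using hcop
  have hδ0 : δ ≠ 0 := by rintro rfl; exact hc hδ
  have hc0 : c ≠ 0 := by rintro rfl; simp at hc
  obtain ⟨c', hcc'⟩ := X_sq_sub_C_dvd_of_isRoot h2 hδ0 hδ hδ'
  have hc' : c'.eval 0 ≠ 0 := by simpa [hcc', hδ0] using hc
  have hlt := natDegree_lt_of_eq_X_sq_sub_C_mul hc0 (by rw [hcc', C_pow])
  obtain ⟨w, e, rfl, hwe, he⟩ := ih _ (hn ▸ hlt) hc' rfl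
  -- `e` and `e*` have no common root, so `e` vanishes at most at one of `δ`, `-δ`;
  -- the factor `X + β` joins `e` for a `β = ±δ` with `e β ≠ 0`
  obtain ⟨β, hβ, hβe⟩ : ∃ β, β ^ 2 = δ ^ 2 ∧ ¬ e.IsRoot β := by
    by_cases heδ : e.IsRoot δ
    · refine ⟨-δ, neg_sq δ, fun he' => ?_⟩
      simpa [heδ.eq_zero, he'.eq_zero] using aeval_ne_zero_of_isCoprime he δ
    · exact ⟨δ, rfl, heδ⟩
  have hβ0 : β ≠ 0 := by rintro rfl; exact hδ0 (by simpa using hβ.symm)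
  refine ⟨(X - C β) * w, (X + C β) * e, ?_, ?_, isCoprime_X_add_C_mul_pstar h2 he hβ0 hβe⟩
  · rw [hcc', ← C_pow, ← hβ, C_pow]
    ring
  · rw [show pstar ((X - C β) * w) = -((X + C β) * pstar w) by
      simp only [pstar_mul, pstar_sub, pstar_X, pstar_C]; ring]
    exact neg_dvd.2 (mul_dvd_mul_left _ hwe)

end Factorization

section TwoByTwo

lemma mstar_mul_mul_apply_fin_two (S M : Matrix (Fin 2) (Fin 2) F[X]) (i j : Fin 2) :
    (mstar S * M * S) i j = pstar (S 0 i) * (M 0 0 * S 0 j + M 0 1 * S 1 j) +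
      pstar (S 1 i) * (M 1 0 * S 0 j + M 1 1 * S 1 j) := by
  simp only [Matrix.mul_apply, Fin.sum_univ_two, mstar, Matrix.of_apply]
  ring

variable {M : Matrix (Fin 2) (Fin 2) F[X]}

lemma apply_one_zero_of_mstar_eq_neg (hM : mstar M = -M) : M 1 0 = -pstar (M 0 1) := by
  rw [pstar_apply_of_mstar_eq_neg hM 1 0, neg_neg]

lemma exists_matCongruent_apply_zero_zero_eq_zero {p q : F[X]} (hpq : IsCoprime p q)
    (hiso : pstar p * (M 0 0 * p + M 0 1 * q) + pstar q * (M 1 0 * p + M 1 1 * q) = 0) :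
    ∃ B, MatCongruent M B ∧ B 0 0 = 0 := by
  obtain ⟨a, b, hab⟩ := hpq
  refine ⟨mstar !![p, -b; q, a] * M * !![p, -b; q, a], ⟨_, ?_, rfl⟩, ?_⟩
  · rw [Matrix.det_fin_two_of, show p * a - -b * q = 1 by linear_combination hab]
    exact isUnit_one
  · rw [mstar_mul_mul_apply_fin_two]
    simpa using hiso

lemma exists_isCoprime_isotropic [IsAlgClosed F] (h2 : (2 : F) ≠ 0) (hM : mstar M = -M) :
    ∃ p q : F[X], IsCoprime p q ∧
      pstar p * (M 0 0 * p + M 0 1 * q) + pstar q * (M 1 0 * p + M 1 1 * q) = 0 := by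
  classical
  by_cases ha : M 0 0 = 0
  · exact ⟨1, 0, isCoprime_one_left, by simp [ha]⟩
  have hdet : pstar M.det = M.det := by
    rw [← det_mstar, hM, Matrix.det_neg]
    simp
  obtain ⟨z, hz⟩ := exists_mul_pstar_eq h2 hdet
  obtain ⟨p, q, hp, hq, hpq⟩ := extract_gcd (z - M 0 1) (M 0 0)
  set h := gcd (z - M 0 1) (M 0 0)
  have hh : h ≠ 0 := gcd_ne_zero_of_right ha
  refine ⟨p, q, (gcd_isUnit_iff p q).1 hpq,
    mul_left_cancel₀ (mul_ne_zero (pstar_eq_zero.not.2 hh) hh) ?_⟩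
  have h00 := pstar_apply_of_mstar_eq_neg hM 0 0
  have h10 := apply_one_zero_of_mstar_eq_neg hM
  have hp' : pstar h * pstar p = pstar z - pstar (M 0 1) := by rw [← pstar_mul, ← hp, pstar_sub]
  have hq' : pstar h * pstar q = - M 0 0 := by rw [← pstar_mul, ← hq, h00]
  -- multiplied by `h* h`, the claim reads `a (z z* - det M) = 0`
  rw [Matrix.det_fin_two] at hz
  linear_combination (M 0 0 * (h * p) + M 0 1 * (h * q)) * hp'
    + (M 1 0 * (h * p) + M 1 1 * (h * q)) * hq'
    - (M 0 0 * (pstar z - pstar (M 0 1)) - M 0 0 * M 1 0) * hp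
    - (M 0 1 * (pstar z - pstar (M 0 1)) - M 0 0 * M 1 1) * hq + M 0 0 * hz - M 0 0 * z * h10

lemma eval_zero_apply_zero_one_ne_zero (h2 : (2 : F) ≠ 0) (hM : mstar M = -M) (h00 : M 0 0 = 0)
    (hI : entryIdeal M = ⊤) : (M 0 1).eval 0 ≠ 0 := by
  intro h01
  have hle : entryIdeal M ≤ RingHom.ker (evalRingHom (0 : F)) := by
    refine entryIdeal_le_iff.2 ?_
    simp [Fin.forall_fin_two, h00, h01, apply_one_zero_of_mstar_eq_neg hM,
      eval_zero_eq_zero_of_pstar_eq_neg h2 (pstar_apply_of_mstar_eq_neg hM 1 1)]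
  simpa using hle (hI ▸ Submodule.mem_top : (1 : F[X]) ∈ entryIdeal M)

lemma exists_matCongruent_apply_zero_one_eq (h2 : (2 : F) ≠ 0) (hM : mstar M = -M)
    (h00 : M 0 0 = 0) (hI : entryIdeal M = ⊤) {w e : F[X]} (hc : M 0 1 = w * e)
    (hwe : pstar w ∣ e) (he : IsCoprime e (pstar e)) :
    ∃ N, MatCongruent M N ∧ N 0 0 = 0 ∧ N 0 1 = w * pstar e := by
  obtain ⟨x, hx⟩ := exists_pstar_mul_sub_mul_pstar_eq h2 he (pstar_apply_of_mstar_eq_neg hM 1 1)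
  obtain ⟨f, rfl⟩ := hwe
  have h10 : M 1 0 = -(w * pstar w * pstar f) := by
    rw [apply_one_zero_of_mstar_eq_neg hM, hc]; simp only [pstar_mul, pstar_pstar]; ring
  obtain ⟨u, v, huv⟩ : IsCoprime x (pstar w) := by
    have hle : entryIdeal M ≤ Ideal.span {x, pstar w} := by
      refine entryIdeal_le_iff.2 ?_
      simp only [Fin.forall_fin_two, Ideal.mem_span_pair, h00, hc, h10, ← hx, pstar_mul,
        pstar_pstar]
      exact ⟨⟨⟨0, 0, by ring⟩, ⟨0, w * f, by ring⟩⟩, ⟨0, -(w * pstar f), by ring⟩,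
        ⟨w * pstar f, -(f * pstar x), by ring⟩⟩
    exact Ideal.mem_span_pair.1 (hle (hI ▸ Submodule.mem_top))
  refine ⟨mstar !![x, -v; pstar w, u] * M * !![x, -v; pstar w, u], ⟨_, ?_, rfl⟩, ?_, ?_⟩
  · rw [Matrix.det_fin_two_of, show x * u - -v * pstar w = 1 by linear_combination huv]
    exact isUnit_one
  all_goals
    rw [mstar_mul_mul_apply_fin_two]
    simp only [Matrix.of_apply, Matrix.cons_val', Matrix.cons_val_zero, Matrix.cons_val_one,
      Matrix.empty_val', Matrix.cons_val_fin_one, pstar_pstar, h00, hc, h10, ← hx, pstar_mul]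
  · ring
  · linear_combination (w * w * pstar f) * huv

lemma exists_matCongruent_isCoprime [IsAlgClosed F] (h2 : (2 : F) ≠ 0) (hM : mstar M = -M)
    (h00 : M 0 0 = 0) (hI : entryIdeal M = ⊤) :
    ∃ N, MatCongruent M N ∧ N 0 0 = 0 ∧ IsCoprime (N 0 1) (pstar (N 0 1)) := by
  obtain ⟨w, e, hc, hwe, he⟩ :=
    exists_eq_mul_pstar_dvd_isCoprime h2 (eval_zero_apply_zero_one_ne_zero h2 hM h00 hI)
  obtain ⟨N, hMN, hN00, hN01⟩ := exists_matCongruent_apply_zero_one_eq h2 hM h00 hI hc hwe he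
  exact ⟨N, hMN, hN00, hN01 ▸ isCoprime_mul_pstar hwe he⟩

lemma exists_matCongruent_zeroDiag (h2 : (2 : F) ≠ 0) (hM : mstar M = -M) (h00 : M 0 0 = 0)
    (hc : IsCoprime (M 0 1) (pstar (M 0 1))) :
    ∃ B, MatCongruent M B ∧ B 0 0 = 0 ∧ B 1 1 = 0 := by
  obtain ⟨s, hs⟩ := exists_pstar_mul_sub_mul_pstar_eq h2 hc (pstar_apply_of_mstar_eq_neg hM 1 1)
  refine ⟨mstar !![1, s; 0, 1] * M * !![1, s; 0, 1],
    ⟨_, by simp [Matrix.det_fin_two_of], rfl⟩, ?_, ?_⟩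
  all_goals
    rw [mstar_mul_mul_apply_fin_two]
    simp only [Matrix.of_apply, Matrix.cons_val', Matrix.cons_val_zero, Matrix.cons_val_one,
      Matrix.empty_val', Matrix.cons_val_fin_one, pstar_one, pstar_zero, h00,
      apply_one_zero_of_mstar_eq_neg hM, ← hs]
    ring

end TwoByTwo

end

theorem skewHermitian_two_by_two_congruent_zeroDiag_general {F : Type*} [Field F]
    [IsAlgClosed F] (h2 : (2 : F) ≠ 0)
    (A : Matrix (Fin 2) (Fin 2) F[X]) (hA : mstar A = -A)
    (hgcd : Ideal.span (Set.range fun p : Fin 2 × Fin 2 => A p.1 p.2) = ⊤) :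
    ∃ B : Matrix (Fin 2) (Fin 2) F[X], MatCongruent A B ∧ B 0 0 = 0 ∧ B 1 1 = 0 := by
  obtain ⟨p, q, hpq, hiso⟩ := exists_isCoprime_isotropic h2 hA
  obtain ⟨B, hAB, hB00⟩ := exists_matCongruent_apply_zero_zero_eq_zero hpq hiso
  have hB := hAB.mstar_eq_neg hA
  obtain ⟨N, hBN, hN00, hN01⟩ :=
    exists_matCongruent_isCoprime h2 hB hB00 (hAB.entryIdeal_eq.trans hgcd)
  obtain ⟨C, hNC, h00, h11⟩ := exists_matCongruent_zeroDiag h2 (hBN.mstar_eq_neg hB) hN00 hN01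
  exact ⟨C, hAB.trans (hBN.trans hNC), h00, h11⟩

/-- A `2×2` skew-hermitian matrix over `F[t]` with nonzero determinant whose
entries generate the unit ideal is congruent to a matrix with zero diagonal. -/
theorem skewHermitian_two_by_two_congruent_zeroDiag {F : Type*} [Field F]
    [IsAlgClosed F] (h2 : (2 : F) ≠ 0)
    (A : Matrix (Fin 2) (Fin 2) F[X]) (hA : mstar A = -A)
    (hdet : A.det ≠ 0)
    (hgcd : Ideal.span (Set.range fun p : Fin 2 × Fin 2 => A p.1 p.2) = ⊤) :
    ∃ B : Matrix (Fin 2) (Fin 2) F[X], MatCongruent A B ∧ B 0 0 = 0 ∧ B 1 1 = 0 :=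
  skewHermitian_two_by_two_congruent_zeroDiag_general h2 A hA hgcd
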